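/- If w is a self-minimal word of length n ≥ 1 over Σ, then n · Lynd(w) = Σ_{d | n} μ(n/d) · |CS(w_(d))|, where the sum (taken over the positive divisors d of n, with integer values since μ takes negative values) equals n times the number of Lyndon words of length n that are lexicographically ≤ w. -/

import Mathlib

/-!
Every nonempty word `x` of length `d` is a rotation `rot (ℓ^(d/|ℓ|)) r`, `r < |ℓ|`, of a power
of a Lyndon word `ℓ` with `|ℓ| ∣ d`; the pair `(ℓ, r)` is unique and `minrot x = ℓ^(d/|ℓ|)`.
Counting words by their Lyndon root therefore gives
`|CS(v)| = Σ_{e ∣ d} e · #{ℓ Lyndon : |ℓ| = e, ℓ^(d/e) ≤ v}`.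
In a self-minimal word `w` every factor is at least the prefix of `w` of the same length, so for
`e ∣ d ≤ |w|` the condition `ℓ^(d/e) ≤ w_(d)` reduces to `ℓ ≤ w_(e)`. Hence
`|CS(w_(d))| = Σ_{e ∣ d} f(e)` with `f(e) = e · #{ℓ Lyndon : |ℓ| = e, ℓ ≤ w_(e)}` for every
`d ∣ n`, and Möbius inversion gives `f(n) = n · Lynd(w)`.
-/

namespace Lyndon

variable {α : Type*}

/-- `rot w c` is the cyclic rotation of `w` obtained by moving its first `c mod |w|`
letters to the end. -/
def rot (w : List α) (c : ℕ) : List α :=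
  w.drop (c % w.length) ++ w.take (c % w.length)

/-- `power w k` is the concatenation of `k` copies of `w`. -/
def power (w : List α) (k : ℕ) : List α := (List.replicate k w).flatten

/-- `minrot w` is the lexicographically minimal cyclic rotation of `w`. -/
def minrot [LinearOrder α] (w : List α) : List α :=
  ((List.range w.length).map (rot w)).foldr min w

/-- A word is self-minimal if it equals its minimal cyclic rotation. -/
def SelfMinimal [LinearOrder α] (w : List α) : Prop := minrot w = w

/-- A word is primitive if it is a `k`-th power (for a positive integer `k`)
only of itself. -/
def Primitive (w : List α) : Prop :=
  ∀ (u : List α) (k : ℕ), 0 < k → w = power u k → u = w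

/-- A Lyndon word is a nonempty word that is primitive and self-minimal. -/
def IsLyndon [LinearOrder α] (w : List α) : Prop :=
  w ≠ [] ∧ Primitive w ∧ SelfMinimal w

/-- `Pref₋(w)`: the words `w_(i)·s` for `0 ≤ i ≤ n-1` and a letter `s < w[i+1]`,
together with `w` itself. -/
def PrefMinus [LinearOrder α] (w : List α) : Set (List α) :=
  {y | (∃ i : Fin w.length, ∃ s : α, s < w.get i ∧ y = w.take i ++ [s]) ∨ y = w}

/-- `L(w)`: the words containing a factor (contiguous subword) from `Pref₋(w)`. -/
def InL [LinearOrder α] (w x : List α) : Prop :=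
  ∃ y ∈ PrefMinus w, y <:+: x

theorem rot_eq_rotate (w : List α) (c : ℕ) : rot w c = w.rotate c :=
  List.rotate_eq_drop_append_take_mod.symm

@[simp] theorem length_rot (w : List α) (c : ℕ) : (rot w c).length = w.length := by
  rw [rot_eq_rotate, List.length_rotate]

@[simp] theorem rot_zero (w : List α) : rot w 0 = w := by
  rw [rot_eq_rotate, List.rotate_zero]

@[simp] theorem rot_length (w : List α) : rot w w.length = w := by
  rw [rot_eq_rotate, List.rotate_length]

theorem rot_rot (w : List α) (a b : ℕ) : rot (rot w a) b = rot w (a + b) := by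
  simp only [rot_eq_rotate, List.rotate_rotate]

theorem rot_mod (w : List α) (c : ℕ) : rot w (c % w.length) = rot w c := by
  simp only [rot_eq_rotate, List.rotate_mod]

theorem exists_rot_rot_eq_self (w : List α) (c : ℕ) : ∃ m, rot (rot w c) m = w := by
  rcases Nat.eq_zero_or_pos w.length with hw | hw
  · exact ⟨0, by simp [rot, List.length_eq_zero_iff.mp hw]⟩
  · refine ⟨w.length - c % w.length, ?_⟩
    rw [← rot_mod w c, rot_rot, Nat.add_sub_cancel' (Nat.mod_lt c hw).le, rot_length]

@[simp] theorem power_zero (u : List α) : power u 0 = [] := rfl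

theorem power_succ (u : List α) (k : ℕ) : power u (k + 1) = u ++ power u k := by
  simp [power, List.replicate_succ]

@[simp] theorem power_one (u : List α) : power u 1 = u := by simp [power]

theorem power_add (u : List α) (a b : ℕ) : power u (a + b) = power u a ++ power u b := by
  rw [power, List.replicate_add, List.flatten_append, power, power]

theorem power_succ' (u : List α) (k : ℕ) : power u (k + 1) = power u k ++ u := by
  rw [power_add, power_one]

theorem power_mul (u : List α) (a b : ℕ) : power u (a * b) = power (power u a) b := by
  induction b with
  | zero => rfl
  | succ b ih => rw [Nat.mul_succ, power_add, ih, power_succ']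

@[simp] theorem length_power (u : List α) (k : ℕ) : (power u k).length = k * u.length := by
  induction k with
  | zero => simp
  | succ k ih => rw [power_succ, List.length_append, ih]; ring

theorem take_power {u : List α} {k : ℕ} (hk : 0 < k) : (power u k).take u.length = u := by
  obtain ⟨k, rfl⟩ := Nat.exists_eq_add_one_of_ne_zero hk.ne'
  rw [power_succ, List.take_left]

theorem power_left_injective {u v : List α} {k : ℕ} (hk : 0 < k) (hl : u.length = v.length)
    (h : power u k = power v k) : u = v := by
  rw [← take_power (u := u) hk, ← take_power (u := v) hk, h, hl]

theorem getElem?_power {u : List α} {k i : ℕ} (hi : i < k * u.length) :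
    (power u k)[i]? = u[i % u.length]? := by
  induction k generalizing i with
  | zero => omega
  | succ k ih =>
    rw [power_succ, List.getElem?_append]
    split_ifs with h
    · rw [Nat.mod_eq_of_lt h]
    · rw [ih (by rw [Nat.succ_mul] at hi; omega)]
      conv_rhs => rw [← Nat.sub_add_cancel (not_lt.mp h), Nat.add_mod_right]

theorem rot_power (u : List α) (k c : ℕ) : rot (power u k) c = power (rot u c) k := by
  rcases Nat.eq_zero_or_pos u.length with hu | hu
  · simp [List.length_eq_zero_iff.mp hu, rot, power]
  rcases Nat.eq_zero_or_pos k with rfl | hk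
  · simp [rot]
  have hkL : 0 < k * u.length := Nat.mul_pos hk hu
  apply List.ext_getElem?
  intro i
  rcases lt_or_ge i (k * u.length) with hi | hi
  · rw [rot_eq_rotate, List.getElem?_rotate (by rwa [length_power]), length_power,
      getElem?_power (Nat.mod_lt _ hkL), Nat.mod_mod_of_dvd _ (dvd_mul_left u.length k),
      getElem?_power (by rwa [length_rot]), length_rot, rot_eq_rotate,
      List.getElem?_rotate (Nat.mod_lt _ hu), Nat.mod_add_mod]
  · rw [List.getElem?_eq_none (by simpa using hi), List.getElem?_eq_none (by simpa using hi)]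

theorem eq_power_of_append_comm {u v : List α} (h : u ++ v = v ++ u) :
    ∃ (p : List α) (a b : ℕ), u = power p a ∧ v = power p b := by
  induction hn : u.length + v.length using Nat.strong_induction_on generalizing u v with
  | _ n ih =>
  rcases Nat.eq_zero_or_pos u.length with hu | hu
  · exact ⟨v, 0, 1, List.length_eq_zero_iff.mp hu, (power_one v).symm⟩
  rcases Nat.eq_zero_or_pos v.length with hv | hv
  · exact ⟨u, 1, 0, (power_one u).symm, List.length_eq_zero_iff.mp hv⟩
  rcases le_total u.length v.length with hle | hle
  · obtain ⟨v', rfl⟩ : u <+: v :=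
      List.prefix_of_prefix_length_le (h ▸ List.prefix_append u v) (List.prefix_append v u) hle
    have h' : u ++ v' = v' ++ u := List.append_cancel_left (h.trans (List.append_assoc u v' u))
    obtain ⟨p, a, b, rfl, rfl⟩ := ih _ (by simp at hn; omega) h' rfl
    exact ⟨p, a, a + b, rfl, (power_add p a b).symm⟩
  · obtain ⟨u', rfl⟩ : v <+: u :=
      List.prefix_of_prefix_length_le (h.symm ▸ List.prefix_append v u) (List.prefix_append u v) hle
    have h' : v ++ u' = u' ++ v :=
      List.append_cancel_left (h.symm.trans (List.append_assoc v u' v))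
    obtain ⟨p, a, b, rfl, rfl⟩ := ih _ (by simp at hn; omega) h' rfl
    exact ⟨p, a + b, a, (power_add p a b).symm, rfl⟩

theorem Primitive.mod_eq_zero_of_rot_eq {l : List α} (hp : Primitive l) (hl : l ≠ [])
    {c : ℕ} (h : rot l c = l) : c % l.length = 0 := by
  have hL := List.length_pos_iff.2 hl
  set r := c % l.length
  -- the two halves of `l` commute, so both are powers of a word that primitivity forces to be `l`
  have hcomm : l.drop r ++ l.take r = l.take r ++ l.drop r := by
    rw [List.take_append_drop]; exact h
  obtain ⟨p, a, b, hdrop, htake⟩ := eq_power_of_append_comm hcomm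
  have hlp : l = power p (b + a) := by rw [power_add, ← htake, ← hdrop, List.take_append_drop]
  have hpos : 0 < b + a := by
    refine Nat.pos_of_ne_zero fun h0 => hl ?_
    rwa [h0, power_zero] at hlp
  obtain rfl := hp p _ hpos hlp
  have hr : r = b * p.length := by
    rw [← length_power, ← htake, List.length_take, min_eq_left (Nat.mod_lt _ hL).le]
  exact Nat.eq_zero_of_dvd_of_lt ⟨b, hr.trans (mul_comm _ _)⟩ (Nat.mod_lt _ hL)

theorem Primitive.rot_injOn {l : List α} (hp : Primitive l) (hl : l ≠ []) {r r' : ℕ}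
    (hr : r < l.length) (hr' : r' < l.length) (h : rot l r = rot l r') : r = r' := by
  have hfix : rot l (r + (l.length - r')) = l := by
    rw [← rot_rot, h, rot_rot, Nat.add_sub_cancel' hr'.le, rot_length]
  have hdvd := Nat.dvd_of_mod_eq_zero (hp.mod_eq_zero_of_rot_eq hl hfix)
  have := Nat.eq_of_dvd_of_lt_two_mul (by omega) hdvd (by omega)
  omega

theorem Primitive.length_dvd_of_power_eq {p q : List α} (hq : Primitive q) (hq0 : q ≠ [])
    {a b : ℕ} (hb : 0 < b) (h : power p a = power q b) : q.length ∣ p.length := by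
  have hrot : power (rot q p.length) b = power q b := by
    rw [← rot_power, ← h, rot_power, rot_length]
  exact Nat.dvd_of_mod_eq_zero
    (hq.mod_eq_zero_of_rot_eq hq0 (power_left_injective hb (length_rot q _) hrot))

theorem Primitive.eq_of_power_eq {p q : List α} (hp : Primitive p) (hq : Primitive q)
    (hp0 : p ≠ []) (hq0 : q ≠ []) {a b : ℕ} (ha : 0 < a) (hb : 0 < b)
    (h : power p a = power q b) : p = q := by
  have hl : p.length = q.length := Nat.dvd_antisymm
    (hp.length_dvd_of_power_eq hp0 ha h.symm) (hq.length_dvd_of_power_eq hq0 hb h)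
  rw [← take_power (u := p) ha, ← take_power (u := q) hb, h, hl]

theorem exists_primitive_root {x : List α} (hx : x ≠ []) :
    ∃ p k, Primitive p ∧ 0 < k ∧ x = power p k := by
  induction hn : x.length using Nat.strong_induction_on generalizing x with
  | _ n ih =>
  by_cases hp : Primitive x
  · exact ⟨x, 1, hp, one_pos, (power_one x).symm⟩
  simp only [Primitive, not_forall] at hp
  obtain ⟨u, k, hk, hxu, hne⟩ := hp
  have hlen : x.length = k * u.length := by rw [hxu, length_power]
  have hu : 0 < u.length := Nat.pos_of_mul_pos_left (hlen ▸ List.length_pos_iff.2 hx)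
  have hk2 : k ≠ 1 := by rintro rfl; exact hne (by simpa using hxu.symm)
  obtain ⟨p, j, hpp, hj, rfl⟩ := ih u.length (by
    rw [← hn, hlen]; exact lt_mul_left hu (by omega))
    (List.length_pos_iff.1 hu) rfl
  exact ⟨p, j * k, hpp, Nat.mul_pos hj hk, by rw [hxu, power_mul]⟩

section LinearOrder
variable [LinearOrder α]

theorem lex_append_of_length_eq : ∀ {u v : List α}, u.length = v.length →
    List.Lex (· < ·) u v → ∀ a b : List α, List.Lex (· < ·) (u ++ a) (v ++ b)
  | _, _, hl, .nil, _, _ => by simp at hl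
  | _, _, _, .rel h, _, _ => .rel h
  | _, _, hl, .cons h, a, b => .cons (lex_append_of_length_eq (by simpa using hl) h a b)

theorem append_lt_append_of_lt {u v : List α} (hl : u.length = v.length) (h : u < v)
    (a b : List α) : u ++ a < v ++ b :=
  lex_append_of_length_eq hl h a b

theorem append_le_append_of_le {u v a b : List α} (hl : u.length = v.length) (h : u ≤ v)
    (hab : a ≤ b) : u ++ a ≤ v ++ b := by
  rcases h.lt_or_eq with h | rfl
  · exact (append_lt_append_of_lt hl h a b).le
  · rcases hab.lt_or_eq with hab | rfl
    · exact le_of_lt (List.Lex.append_left _ hab u)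
    · exact le_rfl

theorem take_le_take_of_le {u v : List α} (hl : u.length = v.length) (h : u ≤ v) (m : ℕ) :
    u.take m ≤ v.take m := by
  by_contra! hlt
  have := append_lt_append_of_lt (by simp [hl]) hlt (v.drop m) (u.drop m)
  rw [List.take_append_drop, List.take_append_drop] at this
  exact this.not_ge h

theorem power_le_power {u v : List α} (hl : u.length = v.length) (h : u ≤ v) (k : ℕ) :
    power u k ≤ power v k := by
  induction k with
  | zero => exact le_rfl
  | succ k ih => rw [power_succ, power_succ]; exact append_le_append_of_le hl h ih

theorem power_lt_power {u v : List α} (hl : u.length = v.length) (h : u < v) {k : ℕ}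
    (hk : 0 < k) : power u k < power v k := by
  obtain ⟨k, rfl⟩ := Nat.exists_eq_add_one_of_ne_zero hk.ne'
  rw [power_succ, power_succ]
  exact append_lt_append_of_lt hl h _ _

theorem foldr_min_le_of_mem {β : Type*} [LinearOrder β] {l : List β} {a : β} (b : β)
    (h : a ∈ l) : l.foldr min b ≤ a := by
  induction l with
  | nil => simp at h
  | cons c l ih =>
    rcases List.mem_cons.mp h with rfl | h
    · exact min_le_left _ _
    · exact (min_le_right _ _).trans (ih h)

theorem foldr_min_eq_or_mem {β : Type*} [LinearOrder β] (l : List β) (b : β) :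
    l.foldr min b = b ∨ l.foldr min b ∈ l := by
  induction l with
  | nil => exact Or.inl rfl
  | cons a l ih =>
    rw [List.foldr_cons, List.mem_cons]
    rcases min_choice a (l.foldr min b) with h | h <;> rw [h]
    · exact Or.inr (Or.inl rfl)
    · exact ih.imp_right Or.inr

theorem minrot_le_rot (x : List α) (c : ℕ) : minrot x ≤ rot x c := by
  rcases Nat.eq_zero_or_pos x.length with hx | hx
  · simp [rot, minrot, List.length_eq_zero_iff.mp hx]
  · rw [← rot_mod]
    exact foldr_min_le_of_mem _ (List.mem_map_of_mem (List.mem_range.2 (Nat.mod_lt _ hx)))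

theorem exists_rot_eq_minrot (x : List α) : ∃ c, rot x c = minrot x := by
  rcases foldr_min_eq_or_mem ((List.range x.length).map (rot x)) x with h | h
  · exact ⟨0, by rw [rot_zero]; exact h.symm⟩
  · obtain ⟨c, -, hc⟩ := List.mem_map.mp h
    exact ⟨c, hc⟩

@[simp] theorem length_minrot (x : List α) : (minrot x).length = x.length := by
  obtain ⟨c, hc⟩ := exists_rot_eq_minrot x
  rw [← hc, length_rot]

theorem selfMinimal_iff_le_rot {x : List α} : SelfMinimal x ↔ ∀ c, x ≤ rot x c := by
  refine ⟨fun h c => h.symm.trans_le (minrot_le_rot x c), fun h => ?_⟩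
  obtain ⟨c, hc⟩ := exists_rot_eq_minrot x
  exact le_antisymm (by simpa using minrot_le_rot x 0) (hc ▸ h c)

theorem minrot_rot (x : List α) (c : ℕ) : minrot (rot x c) = minrot x := by
  obtain ⟨m, hm⟩ := exists_rot_rot_eq_self x c
  obtain ⟨c₁, hc₁⟩ := exists_rot_eq_minrot (rot x c)
  obtain ⟨c₂, hc₂⟩ := exists_rot_eq_minrot x
  apply le_antisymm
  · calc minrot (rot x c) ≤ rot (rot x c) (m + c₂) := minrot_le_rot _ _
      _ = minrot x := by rw [← rot_rot, hm, hc₂]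
  · rw [← hc₁, rot_rot]
    exact minrot_le_rot x _

theorem selfMinimal_minrot (x : List α) : SelfMinimal (minrot x) := by
  obtain ⟨c, hc⟩ := exists_rot_eq_minrot x
  rw [SelfMinimal, ← hc, minrot_rot, hc]

theorem selfMinimal_power {u : List α} (h : SelfMinimal u) (k : ℕ) :
    SelfMinimal (power u k) :=
  selfMinimal_iff_le_rot.2 fun c => rot_power u k c ▸
    power_le_power (length_rot u c).symm (selfMinimal_iff_le_rot.1 h c) k

theorem minrot_rot_power {u : List α} (h : SelfMinimal u) (k c : ℕ) :
    minrot (rot (power u k) c) = power u k := by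
  rw [minrot_rot]; exact selfMinimal_power h k

theorem SelfMinimal.take_le_take_drop {w : List α} (hw : SelfMinimal w) {i m : ℕ}
    (him : i + m ≤ w.length) : w.take m ≤ (w.drop i).take m := by
  have h := take_le_take_of_le (length_rot w i).symm (selfMinimal_iff_le_rot.1 hw i) m
  rwa [rot_eq_rotate, List.rotate_eq_drop_append_take (by omega),
    List.take_append_of_le_length (by simp; omega)] at h

theorem SelfMinimal.power_le_take_of_le {w ℓ : List α} (hw : SelfMinimal w)
    (h : ℓ ≤ w.take ℓ.length) {k : ℕ} (hkw : k * ℓ.length ≤ w.length) :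
    power ℓ k ≤ w.take (k * ℓ.length) := by
  induction k with
  | zero => simp
  | succ j ih =>
    rw [Nat.succ_mul] at hkw ⊢
    rw [power_succ', List.take_add]
    exact append_le_append_of_le (by simp; omega) (ih (by omega))
      (h.trans (hw.take_le_take_drop hkw))

theorem SelfMinimal.power_le_take_iff {w ℓ : List α} (hw : SelfMinimal w) {k : ℕ} (hk : 0 < k)
    (hkw : k * ℓ.length ≤ w.length) :
    power ℓ k ≤ w.take (k * ℓ.length) ↔ ℓ ≤ w.take ℓ.length := by
  refine ⟨fun h => ?_, fun h => hw.power_le_take_of_le h hkw⟩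
  have := take_le_take_of_le (by simp; omega) h ℓ.length
  rwa [take_power hk, List.take_take, min_eq_left (Nat.le_mul_of_pos_left _ hk)] at this

theorem SelfMinimal.exists_isLyndon_power {x : List α} (hsm : SelfMinimal x)
    (hx : x ≠ []) : ∃ ℓ k, IsLyndon ℓ ∧ 0 < k ∧ x = power ℓ k := by
  obtain ⟨p, k, hpp, hk, rfl⟩ := exists_primitive_root hx
  refine ⟨p, k, ⟨fun hp => hx (by simp [hp, power]), hpp, ?_⟩, hk, rfl⟩
  refine selfMinimal_iff_le_rot.2 fun c => not_lt.1 fun hlt => ?_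
  have := power_lt_power (length_rot p c) hlt hk
  rw [← rot_power] at this
  exact this.not_ge (selfMinimal_iff_le_rot.1 hsm c)

theorem IsLyndon.eq_of_rot_power_eq {ℓ ℓ' : List α} (hℓ : IsLyndon ℓ) (hℓ' : IsLyndon ℓ')
    {k k' r r' : ℕ} (hk : 0 < k) (hk' : 0 < k') (hr : r < ℓ.length) (hr' : r' < ℓ'.length)
    (h : rot (power ℓ k) r = rot (power ℓ' k') r') : ℓ = ℓ' ∧ r = r' := by
  have hpow : power ℓ k = power ℓ' k' := by
    rw [← minrot_rot_power hℓ.2.2 k r, h, minrot_rot_power hℓ'.2.2]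
  obtain rfl := hℓ.2.1.eq_of_power_eq hℓ'.2.1 hℓ.1 hℓ'.1 hk hk' hpow
  obtain rfl : k = k' := by
    have := congrArg List.length hpow
    rw [length_power, length_power] at this
    exact Nat.eq_of_mul_eq_mul_right (List.length_pos_iff.2 hℓ.1) this
  refine ⟨rfl, hℓ.2.1.rot_injOn hℓ.1 hr hr' (power_left_injective hk (by simp) ?_)⟩
  rw [← rot_power, ← rot_power, h]

theorem exists_rot_power_eq {x : List α} (hx : x ≠ []) :
    ∃ ℓ r, IsLyndon ℓ ∧ ℓ.length ∣ x.length ∧ r < ℓ.length ∧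
      rot (power ℓ (x.length / ℓ.length)) r = x := by
  obtain ⟨ℓ, k, hℓ, -, hmin⟩ := (selfMinimal_minrot x).exists_isLyndon_power
    (by rwa [← List.length_pos_iff, length_minrot, List.length_pos_iff])
  have hℓ0 := List.length_pos_iff.2 hℓ.1
  have hlen : x.length = k * ℓ.length := by rw [← length_minrot, hmin, length_power]
  obtain ⟨c, hc⟩ := exists_rot_eq_minrot x
  obtain ⟨m, hm⟩ := exists_rot_rot_eq_self x c
  refine ⟨ℓ, m % ℓ.length, hℓ, ⟨k, hlen.trans (mul_comm _ _)⟩, Nat.mod_lt _ hℓ0, ?_⟩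
  rw [hlen, Nat.mul_div_cancel _ hℓ0, rot_power, rot_mod, ← rot_power, ← hmin, ← hc, hm]

theorem ncard_setOf_minrot [Finite α] (P : List α → Prop) {d : ℕ} (hd : 0 < d) :
    {x : List α | x.length = d ∧ P (minrot x)}.ncard =
      ∑ e ∈ d.divisors,
        e * {ℓ : List α | IsLyndon ℓ ∧ ℓ.length = e ∧ P (power ℓ (d / e))}.ncard := by
  classical
  set L : ℕ → Set (List α) := fun e => {ℓ | IsLyndon ℓ ∧ ℓ.length = e ∧ P (power ℓ (d / e))}
  have hL : ∀ e, (L e).Finite := fun e => (List.finite_length_eq α e).subset fun ℓ h => h.2.1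
  have hX : {x : List α | x.length = d ∧ P (minrot x)}.Finite :=
    (List.finite_length_eq α d).subset fun x h => h.1
  have hsum : ∑ e ∈ d.divisors, e * (L e).ncard =
      (d.divisors.sigma fun e => (hL e).toFinset ×ˢ Finset.range e).card := by
    rw [Finset.card_sigma]
    refine Finset.sum_congr rfl fun e _ => ?_
    rw [Finset.card_product, Finset.card_range, Set.ncard_eq_toFinset_card _ (hL e), mul_comm]
  rw [hsum, Set.ncard_eq_toFinset_card _ hX]
  symm
  refine Finset.card_bij (fun p _ => rot (power p.2.1 (d / p.1)) p.2.2) ?_ ?_ ?_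
  · rintro ⟨e, ℓ, r⟩ hp
    simp only [Finset.mem_sigma, Finset.mem_product, Set.Finite.mem_toFinset, Finset.mem_range,
      Nat.mem_divisors, L] at hp ⊢
    obtain ⟨⟨hed, -⟩, ⟨hℓ, rfl, hP⟩, -⟩ := hp
    refine ⟨by simp [Nat.div_mul_cancel hed], ?_⟩
    rwa [minrot_rot_power hℓ.2.2]
  · rintro ⟨e, ℓ, r⟩ hp ⟨e', ℓ', r'⟩ hp' h
    simp only [Finset.mem_sigma, Finset.mem_product, Set.Finite.mem_toFinset, Finset.mem_range,
      Nat.mem_divisors, L] at hp hp'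
    obtain ⟨⟨hed, -⟩, ⟨hℓ, rfl, -⟩, hr⟩ := hp
    obtain ⟨⟨hed', -⟩, ⟨hℓ', rfl, -⟩, hr'⟩ := hp'
    obtain ⟨rfl, rfl⟩ := hℓ.eq_of_rot_power_eq hℓ' (Nat.div_pos (Nat.le_of_dvd hd hed)
      (List.length_pos_iff.2 hℓ.1)) (Nat.div_pos (Nat.le_of_dvd hd hed')
      (List.length_pos_iff.2 hℓ'.1)) hr hr' h
    rfl
  · intro x hx
    simp only [Set.Finite.mem_toFinset] at hx
    obtain ⟨rfl, hP⟩ := hx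
    obtain ⟨ℓ, r, hℓ, hdvd, hr, hx⟩ := exists_rot_power_eq (List.length_pos_iff.1 hd)
    rw [← hx, minrot_rot_power hℓ.2.2] at hP
    refine ⟨⟨ℓ.length, ℓ, r⟩, ?_, hx⟩
    simp only [Finset.mem_sigma, Finset.mem_product, Set.Finite.mem_toFinset, Finset.mem_range,
      Nat.mem_divisors, L]
    exact ⟨⟨hdvd, hd.ne'⟩, ⟨hℓ, rfl, hP⟩, hr⟩

theorem SelfMinimal.ncard_setOf_minrot_le_take [Finite α] {w : List α}
    (hw : SelfMinimal w) {d : ℕ} (hd : 0 < d) (hdw : d ≤ w.length) :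
    {x : List α | x.length = d ∧ minrot x ≤ w.take d}.ncard =
      ∑ e ∈ d.divisors, e * {ℓ : List α | IsLyndon ℓ ∧ ℓ.length = e ∧ ℓ ≤ w.take e}.ncard := by
  rw [ncard_setOf_minrot (· ≤ w.take d) hd]
  refine Finset.sum_congr rfl fun e he => ?_
  congr 2
  ext ℓ
  refine and_congr_right fun hℓ => and_congr_right fun hlen => ?_
  subst hlen
  have hed := Nat.div_mul_cancel (Nat.dvd_of_mem_divisors he)
  have := hw.power_le_take_iff (Nat.div_pos (Nat.divisor_le he) (List.length_pos_iff.2 hℓ.1))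
    (hed.symm ▸ hdw)
  rwa [hed] at this

end LinearOrder

theorem stmt_6_general [LinearOrder α] [Fintype α]
    (w : List α) (n : ℕ) (hn : 1 ≤ n) (hw : w.length = n) (hsm : SelfMinimal w) :
    (n : ℤ) * ({l : List α | IsLyndon l ∧ l.length = n ∧ l ≤ w}.ncard : ℤ) =
      ∑ d ∈ n.divisors, ArithmeticFunction.moebius (n / d) *
        ({x : List α | x.length = d ∧ minrot x ≤ w.take d}.ncard : ℤ) := by
  have hinv := (ArithmeticFunction.sum_eq_iff_sum_mul_moebius_eq_on (R := ℤ)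
    (f := fun e => (e * {ℓ : List α | IsLyndon ℓ ∧ ℓ.length = e ∧ ℓ ≤ w.take e}.ncard : ℕ))
    (g := fun d => ({x : List α | x.length = d ∧ minrot x ≤ w.take d}.ncard : ℕ))
    {m | m ∣ n} fun _ _ h h' => h.trans h').1
    (fun d hd hdn => by
      rw [hsm.ncard_setOf_minrot_le_take hd (hw ▸ Nat.le_of_dvd hn hdn), Nat.cast_sum])
    n hn dvd_rfl
  simp only [Int.cast_id] at hinv
  rw [Nat.sum_divisorsAntidiagonal' (f := fun a b => (ArithmeticFunction.moebius a : ℤ) *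
    ({x : List α | x.length = b ∧ minrot x ≤ w.take b}.ncard : ℕ))] at hinv
  rw [hinv, ← hw, List.take_length, Nat.cast_mul]

/-- If `w` is a self-minimal word of length `n ≥ 1`, then
`n · Lynd(w) = Σ_{d ∣ n} μ(n/d) · |CS(w_(d))|`, where `Lynd(w)` is the number of
Lyndon words of length `n` that are `≤ w`, and `CS(v) = {x : |x| = |v|, minrot(x) ≤ v}`. -/
theorem stmt_6 [LinearOrder α] [Fintype α] [Nonempty α]
    (w : List α) (n : ℕ) (hn : 1 ≤ n) (hw : w.length = n) (hsm : SelfMinimal w) :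
    (n : ℤ) * ({l : List α | IsLyndon l ∧ l.length = n ∧ l ≤ w}.ncard : ℤ) =
      ∑ d ∈ n.divisors, ArithmeticFunction.moebius (n / d) *
        ({x : List α | x.length = d ∧ minrot x ≤ w.take d}.ncard : ℤ) :=
  stmt_6_general w n hn hw hsm

end Lyndon
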